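/- arXiv:2309.15075 — 4 statements merged into one kernel-verified Lean document; each statement's English description precedes it below -/
import Mathlib

section
/- The logistic loss φ(t) = log(1 + e^{−t}) is classification-calibrated: for every η ∈ [0,1] with η ≠ 1/2, H⁻(η) > H(η), where H⁻(η) = inf_{α: α(2η−1) ≤ 0} [η φ(α) + (1−η) φ(−α)] and H(η) = inf_{α ∈ ℝ} [η φ(α) + (1−η) φ(−α)]. -/
open Real

/-- The logistic loss `φ(t) = log(1 + e^{−t})`. -/
noncomputable def logisticLoss (t : ℝ) : ℝ := Real.log (1 + Real.exp (-t))

/-!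
Since `1 + e^{-a} = 2 e^{-a/2} cosh (a/2)`, the conditional risk is
`η φ(a) + (1 - η) φ(-a) = log 2 + log cosh (a/2) - (η - 1/2) a`.
On the half-line `a (2η - 1) ≤ 0` both variable terms are nonnegative, so `H⁻(η) ≥ log 2`.
On the other side, `log cosh x ≤ x² / 2` makes the risk at `a = 2η - 1` at most
`log 2 - 3 (2η - 1)² / 8 < log 2` when `η ≠ 1/2`.
-/

noncomputable def logisticCondRisk (η a : ℝ) : ℝ :=
  η * logisticLoss a + (1 - η) * logisticLoss (-a)

lemma logisticLoss_nonneg (t : ℝ) : 0 ≤ logisticLoss t :=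
  Real.log_nonneg (le_add_of_nonneg_right (exp_pos _).le)

lemma logisticLoss_eq_log_cosh (t : ℝ) :
    logisticLoss t = log 2 - t / 2 + log (cosh (t / 2)) := by
  have hfactor : 1 + exp (-t) = 2 * exp (-(t / 2)) * cosh (t / 2) := by
    rw [cosh_eq, mul_comm 2, mul_assoc, mul_div_cancel₀ _ two_ne_zero, mul_add, ← exp_add,
      ← exp_add, neg_add_cancel, exp_zero, ← neg_add, add_halves]
  rw [logisticLoss, hfactor, log_mul (by positivity) (cosh_pos _).ne',
    log_mul two_ne_zero (exp_pos _).ne', log_exp]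
  ring

lemma logisticCondRisk_eq (η a : ℝ) :
    logisticCondRisk η a = log 2 + log (cosh (a / 2)) - (η - 1 / 2) * a := by
  rw [logisticCondRisk, logisticLoss_eq_log_cosh, logisticLoss_eq_log_cosh, neg_div, cosh_neg]
  ring

lemma logisticCondRisk_nonneg {η : ℝ} (hη : η ∈ Set.Icc (0 : ℝ) 1) (a : ℝ) :
    0 ≤ logisticCondRisk η a :=
  add_nonneg (mul_nonneg hη.1 (logisticLoss_nonneg a))
    (mul_nonneg (sub_nonneg.2 hη.2) (logisticLoss_nonneg (-a)))

lemma log_two_le_logisticCondRisk {η a : ℝ} (ha : a * (2 * η - 1) ≤ 0) :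
    log 2 ≤ logisticCondRisk η a := by
  have hcosh : 0 ≤ log (cosh (a / 2)) := Real.log_nonneg (one_le_cosh _)
  rw [logisticCondRisk_eq]
  nlinarith

lemma log_cosh_le_sq_div_two (x : ℝ) : log (cosh x) ≤ x ^ 2 / 2 :=
  (log_le_iff_le_exp (cosh_pos x)).2 (cosh_le_exp_half_sq x)

lemma logisticCondRisk_lt_log_two {η : ℝ} (hη : η ≠ 1 / 2) :
    logisticCondRisk η (2 * η - 1) < log 2 := by
  have hcosh := log_cosh_le_sq_div_two ((2 * η - 1) / 2)
  have hpos : 0 < (2 * η - 1) ^ 2 :=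
    sq_pos_of_ne_zero (fun h ↦ hη (by linarith))
  rw [logisticCondRisk_eq]
  nlinarith

/-- **Classification calibration of the logistic loss**: for every `η ∈ [0,1]` with
`η ≠ 1/2`, `H⁻(η) > H(η)`, where `H(η)` is the unconstrained infimum of the conditional
`φ`-risk and `H⁻(η)` is the infimum restricted to `α` with `α(2η−1) ≤ 0`. -/
theorem logistic_classification_calibrated (η : ℝ) (hη : η ∈ Set.Icc (0:ℝ) 1)
    (hne : η ≠ 1/2) :
    sInf {v : ℝ | ∃ a : ℝ, v = η * logisticLoss a + (1 - η) * logisticLoss (-a)}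
      < sInf {v : ℝ | ∃ a : ℝ, a * (2 * η - 1) ≤ 0 ∧
          v = η * logisticLoss a + (1 - η) * logisticLoss (-a)} := by
  have hbdd : BddBelow {v : ℝ | ∃ a : ℝ, v = logisticCondRisk η a} := by
    refine ⟨0, ?_⟩
    rintro v ⟨a, rfl⟩
    exact logisticCondRisk_nonneg hη a
  have hH : sInf {v : ℝ | ∃ a : ℝ, v = logisticCondRisk η a} < log 2 :=
    (csInf_le hbdd ⟨_, rfl⟩).trans_lt (logisticCondRisk_lt_log_two hne)
  have hHminus :
      log 2 ≤ sInf {v : ℝ | ∃ a : ℝ, a * (2 * η - 1) ≤ 0 ∧ v = logisticCondRisk η a} := by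
    refine le_csInf ⟨_, 0, by simp, rfl⟩ ?_
    rintro v ⟨a, ha, rfl⟩
    exact log_two_le_logisticCondRisk ha
  exact hH.trans_le hHminus
end

section
/- For ψ: [0,∞) → [0,∞) and c > 0, define ψ_c(δ) := ψ(δ + c). Then for all u > 0 and ε ∈ (0,1], ψ_c^♯(u) ≤ max(ψ^♯(εu/2) − c, cε), where ψ^♯(ε) = inf{δ > 0 : sup_{σ ≥ δ} ψ(σ)/σ ≤ ε}. -/
open Set ENNReal

/-- The ♭-transform: `ψ^♭(δ) = sup_{σ ≥ δ, σ ≥ 0} ψ(σ)/σ` (valued in `ℝ≥0∞`). -/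
noncomputable def flatTransform (ψ : ℝ → ℝ) (δ : ℝ) : ℝ≥0∞ :=
  ⨆ σ ∈ {σ : ℝ | δ ≤ σ ∧ 0 ≤ σ}, ENNReal.ofReal (ψ σ / σ)

/-- The ♯-transform: `ψ^♯(ε) = inf{δ > 0 : ψ^♭(δ) ≤ ε}`, with `inf ∅ = ∞`. -/
noncomputable def sharpTransform (ψ : ℝ → ℝ) (ε : ℝ) : ℝ≥0∞ :=
  ⨅ δ ∈ {δ : ℝ | 0 < δ ∧ flatTransform ψ δ ≤ ENNReal.ofReal ε}, ENNReal.ofReal δ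

/-!
If `ψ^♭(δ) ≤ εu/2`, then `δ_c := max(δ - c, cε)` witnesses `ψ_c^♯(u) ≤ δ_c`: for `σ ≥ δ_c` we have
`σ + c ≥ δ` and `c ≤ σ/ε`, so `ψ(σ + c) ≤ (εu/2)(σ + c) ≤ uσ/2 + uσ/2`. Taking the infimum over
admissible `δ` gives the claim, because `x ↦ max(x - c, cε)` is monotone, continuous and fixes `∞`
on `ℝ≥0∞`, hence commutes with infima.
-/

theorem Monotone.map_iInf₂_of_continuous {α β ι : Type*} {κ : ι → Sort*}
    [CompleteLinearOrder α] [TopologicalSpace α] [OrderTopology α]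
    [CompleteLinearOrder β] [TopologicalSpace β] [OrderClosedTopology β]
    {f : α → β} (Cf : Continuous f) (Mf : Monotone f) (ftop : f ⊤ = ⊤) (g : ∀ i, κ i → α) :
    f (⨅ i, ⨅ j, g i j) = ⨅ i, ⨅ j, f (g i j) := by
  rw [Mf.map_iInf_of_continuousAt Cf.continuousAt ftop]
  exact iInf_congr fun i => Mf.map_iInf_of_continuousAt Cf.continuousAt ftop

section Transforms

variable {ψ : ℝ → ℝ} {δ r : ℝ}

theorem flatTransform_le_ofReal (h : ∀ σ, δ ≤ σ → 0 < σ → ψ σ ≤ r * σ) :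
    flatTransform ψ δ ≤ ENNReal.ofReal r := by
  refine iSup₂_le ?_
  rintro σ ⟨hδσ, hσ⟩
  rcases hσ.eq_or_lt with rfl | hσ
  · simp
  · exact ofReal_le_ofReal ((div_le_iff₀ hσ).2 (h σ hδσ hσ))

theorem le_mul_of_flatTransform_le_ofReal (h : flatTransform ψ δ ≤ ENNReal.ofReal r)
    (hr : 0 ≤ r) {σ : ℝ} (hδσ : δ ≤ σ) (hσ : 0 < σ) : ψ σ ≤ r * σ := by
  have hle : ENNReal.ofReal (ψ σ / σ) ≤ ENNReal.ofReal r :=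
    (le_iSup₂_of_le σ ⟨hδσ, hσ.le⟩ le_rfl).trans h
  exact (div_le_iff₀ hσ).1 ((ofReal_le_ofReal_iff hr).1 hle)

theorem sharpTransform_le_ofReal (hδ : 0 < δ) (h : flatTransform ψ δ ≤ ENNReal.ofReal r) :
    sharpTransform ψ r ≤ ENNReal.ofReal δ :=
  iInf₂_le δ ⟨hδ, h⟩

variable {c u ε : ℝ}

theorem flatTransform_shift_le (hc : 0 ≤ c) (hu : 0 ≤ u) (hε : ε ∈ Icc (0 : ℝ) 1)
    (h : flatTransform ψ δ ≤ ENNReal.ofReal (ε * u / 2)) :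
    flatTransform (fun σ => ψ (σ + c)) (max (δ - c) (c * ε)) ≤ ENNReal.ofReal u := by
  refine flatTransform_le_ofReal fun σ hσδ hσ => ?_
  obtain ⟨hδσ, hcσ⟩ := max_le_iff.1 hσδ
  have hψσ : ψ (σ + c) ≤ ε * u / 2 * (σ + c) :=
    le_mul_of_flatTransform_le_ofReal h (by positivity [hε.1]) (by linarith) (by linarith)
  linarith [mul_le_mul_of_nonneg_right hε.2 (mul_nonneg hu hσ.le),
    mul_le_mul_of_nonneg_left hcσ hu]

theorem sharpTransform_shift_le (hc : 0 < c) (hu : 0 ≤ u) (hε : ε ∈ Ioc (0 : ℝ) 1)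
    (h : flatTransform ψ δ ≤ ENNReal.ofReal (ε * u / 2)) :
    sharpTransform (fun σ => ψ (σ + c)) u
      ≤ max (ENNReal.ofReal δ - ENNReal.ofReal c) (ENNReal.ofReal (c * ε)) := by
  rw [← ofReal_sub _ hc.le, ← ofReal_max]
  exact sharpTransform_le_ofReal (lt_max_of_lt_right (mul_pos hc hε.1))
    (flatTransform_shift_le hc.le hu (Ioc_subset_Icc_self hε) h)

end Transforms

theorem sharpTransform_shift_general (ψ : ℝ → ℝ)
    (c : ℝ) (hc : 0 < c) (u ε : ℝ) (hu : 0 < u) (hε : ε ∈ Set.Ioc (0:ℝ) 1) :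
    sharpTransform (fun δ => ψ (δ + c)) u
      ≤ max (sharpTransform ψ (ε * u / 2) - ENNReal.ofReal c)
          (ENNReal.ofReal (c * ε)) := by
  let f : ℝ≥0∞ → ℝ≥0∞ := fun x => max (x - ENNReal.ofReal c) (ENNReal.ofReal (c * ε))
  have hf : Monotone f := fun _ _ hxy => max_le_max_right _ (tsub_le_tsub_right hxy _)
  calc sharpTransform (fun δ => ψ (δ + c)) u
      ≤ ⨅ δ ∈ {δ : ℝ | 0 < δ ∧ flatTransform ψ δ ≤ ENNReal.ofReal (ε * u / 2)},
          f (ENNReal.ofReal δ) :=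
        le_iInf₂ fun δ hδ => sharpTransform_shift_le hc hu.le hε hδ.2
    _ = f (sharpTransform ψ (ε * u / 2)) :=
        (hf.map_iInf₂_of_continuous ((continuous_sub_right _).max continuous_const)
          (by simp) _).symm

/-- For `ψ : [0,∞) → [0,∞)` and `c > 0`, the shifted function `ψ_c(δ) := ψ(δ + c)`
satisfies `ψ_c^♯(u) ≤ max(ψ^♯(εu/2) − c, cε)` for all `u > 0` and `ε ∈ (0,1]`. -/
theorem sharpTransform_shift (ψ : ℝ → ℝ) (hψ : ∀ x, 0 ≤ ψ x)
    (c : ℝ) (hc : 0 < c) (u ε : ℝ) (hu : 0 < u) (hε : ε ∈ Set.Ioc (0:ℝ) 1) :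
    sharpTransform (fun δ => ψ (δ + c)) u
      ≤ max (sharpTransform ψ (ε * u / 2) - ENNReal.ofReal c)
          (ENNReal.ofReal (c * ε)) :=
  sharpTransform_shift_general ψ c hc u ε hu hε
end

section
/- Let η_σ be defined on a ball B(g, 1/(4q)) ⊂ ℝ^d by η_σ(x) = (1 + φ(q(x−g)))/2 with φ(x) = q^{−r} h(‖x‖₂) where h = 1 on [0,1/4] and h = 0 on [1/2,∞), 0 ≤ h ≤ 1. If X is uniform on the union of m such disjoint balls each with total mass w, then P(0 < |η_σ(X) − 1/2| ≤ t) = m·w·1_{t ≥ q^{−r}/2}; consequently the margin condition with exponent α holds provided m·w ≤ (q^{−r}/2)^α. -/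
open MeasureTheory ProbabilityTheory Set Real
open scoped ENNReal

/-!
On each ball `B(g_i, 1/(4q))` we have `q‖x - g_i‖ < 1/4`, so `h = 1` there and `η - 1/2`
equals the constant `q^{-r}/2`. Hence the margin set `{0 < |η - 1/2| ≤ t}` contains every ball
when `q^{-r}/2 ≤ t` and misses all of them otherwise, and `X`, a mixture of uniform laws on the
balls, gives it mass `m w` or `0`. The margin bound then follows from monotonicity of `t ↦ t^α`.
-/

section UniformMixture

variable {Ω ι : Type*} [MeasurableSpace Ω] [Fintype ι] (ν : Measure Ω)
  (B : ι → Set Ω) (c : ℝ≥0∞) {S : Set Ω}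

lemma sum_smul_cond_apply_of_forall_subset (h0 : ∀ i, ν (B i) ≠ 0)
    (htop : ∀ i, ν (B i) ≠ ∞) (hS : ∀ i, B i ⊆ S) :
    (∑ i, c • ν[|B i]) S = Fintype.card ι * c := by
  have hcond : ∀ i, ν[S|B i] = 1 := fun i =>
    haveI := cond_isProbabilityMeasure_of_finite (h0 i) (htop i)
    le_antisymm prob_le_one
      ((cond_apply_self (h0 i) (htop i)).symm.le.trans (measure_mono (hS i)))
  simp [Measure.finsetSum_apply, hcond]

lemma sum_smul_cond_apply_of_forall_disjoint (hB : ∀ i, MeasurableSet (B i))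
    (hS : ∀ i, Disjoint (B i) S) :
    (∑ i, c • ν[|B i]) S = 0 := by
  simp [Measure.finsetSum_apply, cond_apply (hB _), (hS _).inter_eq]

end UniformMixture

lemma abs_bump_sub_half_of_mem_ball {E : Type*} [SeminormedAddCommGroup E] {q : ℕ}
    (hq : 0 < q) (r : ℝ) {h : ℝ → ℝ} (hh1 : ∀ x ∈ Icc (0 : ℝ) (1 / 4), h x = 1) {g x : E}
    (hx : x ∈ Metric.ball g (1 / (4 * (q : ℝ)))) :
    |(1 + (q : ℝ) ^ (-r) * h ((q : ℝ) * ‖x - g‖)) / 2 - 1 / 2| = (q : ℝ) ^ (-r) / 2 := by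
  have hq' : (0 : ℝ) < q := by exact_mod_cast hq
  have hlt : (q : ℝ) * ‖x - g‖ < 1 / 4 := by
    rw [mem_ball_iff_norm, lt_div_iff₀ (by positivity)] at hx
    linarith
  rw [hh1 _ ⟨by positivity, hlt.le⟩, mul_one, add_div, add_sub_cancel_left,
    abs_of_pos (by positivity)]

lemma ite_le_rpow {a b t α : ℝ} (ha : 0 ≤ a) (hb : b ≤ a ^ α) (ht : 0 ≤ t) (hα : 0 ≤ α) :
    (if a ≤ t then b else 0) ≤ t ^ α := by
  split_ifs with hat
  · exact hb.trans (rpow_le_rpow ha hat hα)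
  · exact rpow_nonneg ht α

theorem lower_bound_margin_construction_general (d : ℕ)
    (q m : ℕ) (hq : 0 < q)
    (r w α : ℝ) (hw : 0 < w) (hα : 0 < α)
    (g : Fin m → EuclideanSpace ℝ (Fin d))
    (h : ℝ → ℝ)
    (hh1 : ∀ x ∈ Set.Icc (0:ℝ) (1/4), h x = 1)
    (η : EuclideanSpace ℝ (Fin d) → ℝ)
    (hη : ∀ i : Fin m, ∀ x ∈ Metric.ball (g i) (1 / (4 * (q : ℝ))),
      η x = (1 + (q : ℝ) ^ (-r) * h ((q : ℝ) * ‖x - g i‖)) / 2)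
    -- the marginal of X: mass `w` spread uniformly over each ball
    (μ : Measure (EuclideanSpace ℝ (Fin d)))
    (hμ : μ = ∑ i : Fin m, (ENNReal.ofReal w) •
      ((volume (Metric.ball (g i) (1 / (4 * (q : ℝ)))))⁻¹ •
        volume.restrict (Metric.ball (g i) (1 / (4 * (q : ℝ)))))) :
    (∀ t : ℝ, 0 < t →
      (μ {x | 0 < |η x - 1/2| ∧ |η x - 1/2| ≤ t}).toReal
        = if (q : ℝ) ^ (-r) / 2 ≤ t then (m : ℝ) * w else 0) ∧
    ((m : ℝ) * w ≤ ((q : ℝ) ^ (-r) / 2) ^ α →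
      ∀ t : ℝ, 0 < t →
        (μ {x | 0 < |η x - 1/2| ∧ |η x - 1/2| ≤ t}).toReal ≤ t ^ α) := by
  set B := fun i => Metric.ball (g i) (1 / (4 * (q : ℝ)))
  have hμ' : μ = ∑ i, ENNReal.ofReal w • volume[|B i] := hμ
  have hc : 0 < (q : ℝ) ^ (-r) / 2 := by positivity
  have hball : ∀ i, ∀ x ∈ B i, |η x - 1 / 2| = (q : ℝ) ^ (-r) / 2 := fun i x hx => by
    rw [hη i x hx]
    exact abs_bump_sub_half_of_mem_ball hq r hh1 hx
  have hmargin : ∀ t : ℝ,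
      (μ {x | 0 < |η x - 1/2| ∧ |η x - 1/2| ≤ t}).toReal
        = if (q : ℝ) ^ (-r) / 2 ≤ t then (m : ℝ) * w else 0 := by
    intro t
    have hR : 0 < 1 / (4 * (q : ℝ)) := by positivity
    split_ifs with hct
    · rw [hμ', sum_smul_cond_apply_of_forall_subset _ _ _
        (fun _ => (Metric.measure_ball_pos _ _ hR).ne') (fun _ => measure_ball_lt_top.ne)
        (fun i x hx => by simp only [mem_ofPred_eq, hball i x hx]; exact ⟨hc, hct⟩)]
      simp [ENNReal.toReal_ofReal hw.le]
    · rw [hμ', sum_smul_cond_apply_of_forall_disjoint _ _ _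
        (fun _ => Metric.isOpen_ball.measurableSet)
        (fun i => disjoint_left.mpr fun x hx hxS => hct (hball i x hx ▸ hxS.2))]
      simp
  exact ⟨fun t _ => hmargin t,
    fun hmw t ht => (hmargin t).trans_le (ite_le_rpow hc.le hmw ht.le hα.le)⟩

/-- **Margin condition for the lower-bound construction.** Let `η_σ` equal
`(1 + φ(q(x−g_i)))/2` on each of `m` disjoint balls `B(g_i, 1/(4q))`, with
`φ(x) = q^{−r} h(‖x‖₂)` where `h = 1` on `[0,1/4]`, `h = 0` on `[1/2,∞)`, `0 ≤ h ≤ 1`.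
If `X` has mass `w` uniformly on each ball, then
`P(0 < |η_σ(X) − 1/2| ≤ t) = m w 1_{t ≥ q^{−r}/2}`; consequently the margin condition
with exponent `α` holds provided `m w ≤ (q^{−r}/2)^α`. -/
theorem lower_bound_margin_construction (d : ℕ) (hd : 0 < d)
    (q m : ℕ) (hq : 0 < q) (hm : 0 < m)
    (r w α : ℝ) (hr : 0 < r) (hw : 0 < w) (hα : 0 < α)
    (g : Fin m → EuclideanSpace ℝ (Fin d))
    (hdisj : Pairwise (Function.onFun Disjoint
      (fun i => Metric.ball (g i) (1 / (4 * (q : ℝ))))))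
    (h : ℝ → ℝ)
    (hh1 : ∀ x ∈ Set.Icc (0:ℝ) (1/4), h x = 1)
    (hh0 : ∀ x ∈ Set.Ici (1/2 : ℝ), h x = 0)
    (hhrange : ∀ x : ℝ, 0 ≤ h x ∧ h x ≤ 1)
    (η : EuclideanSpace ℝ (Fin d) → ℝ) (hηm : Measurable η)
    (hη : ∀ i : Fin m, ∀ x ∈ Metric.ball (g i) (1 / (4 * (q : ℝ))),
      η x = (1 + (q : ℝ) ^ (-r) * h ((q : ℝ) * ‖x - g i‖)) / 2)
    -- the marginal of X: mass `w` spread uniformly over each ball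
    (μ : Measure (EuclideanSpace ℝ (Fin d)))
    (hμ : μ = ∑ i : Fin m, (ENNReal.ofReal w) •
      ((volume (Metric.ball (g i) (1 / (4 * (q : ℝ)))))⁻¹ •
        volume.restrict (Metric.ball (g i) (1 / (4 * (q : ℝ)))))) :
    (∀ t : ℝ, 0 < t →
      (μ {x | 0 < |η x - 1/2| ∧ |η x - 1/2| ≤ t}).toReal
        = if (q : ℝ) ^ (-r) / 2 ≤ t then (m : ℝ) * w else 0) ∧
    ((m : ℝ) * w ≤ ((q : ℝ) ^ (-r) / 2) ^ α →
      ∀ t : ℝ, 0 < t →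
        (μ {x | 0 < |η x - 1/2| ∧ |η x - 1/2| ≤ t}).toReal ≤ t ^ α) :=
  lower_bound_margin_construction_general d q m hq r w α hw hα g h hh1 η hη μ hμ
end

section
/- Assouad's lemma: Let {P_σ : σ ∈ {0,1}^m} be probability measures such that the total variation distance V(P_σ, P_{σ'}) ≤ α < 1 whenever the Hamming distance ρ(σ, σ') = 1. Then inf over estimators σ̂ (measurable functions of the data into {0,1}^m) of max_{σ ∈ {0,1}^m} E_{P_σ}[ρ(σ̂, σ)] is at least (m/2)(1 − α). -/
open MeasureTheory Set

/-- Total variation distance `V(P,Q) = sup_A |P(A) − Q(A)|` over measurable sets. -/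
noncomputable def tvDist {Ω : Type*} [MeasurableSpace Ω] (P Q : Measure Ω) : ℝ :=
  sSup {r : ℝ | ∃ A : Set Ω, MeasurableSet A ∧ r = |(P A).toReal - (Q A).toReal|}

/-- Hamming distance on `{0,1}^m` (as a real number). -/
def hamming01 {m : ℕ} (σ σ' : Fin m → Bool) : ℝ :=
  ∑ i : Fin m, if σ i ≠ σ' i then 1 else 0

/-!
Assouad's cube argument. The risk of `σ̂` at `σ` is the sum over coordinates `i` of the
probability that `σ̂` gets the `i`-th bit wrong. Pair each vertex `σ` of the cube with its
neighbour `τ` across direction `i`: the bit `σ̂ i` is a test between `P σ` and `P τ`, and the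
two error probabilities of any test add up to at least `1 - V(P σ, P τ) ≥ 1 - α`.
Summing over `i` and over all pairs, the average risk over the cube is at least
`m (1 - α) / 2`, so some vertex has at least that risk.
-/

lemma abs_sub_le_tvDist {Ω : Type*} [MeasurableSpace Ω] (P Q : Measure Ω)
    [IsFiniteMeasure P] [IsFiniteMeasure Q] {A : Set Ω} (hA : MeasurableSet A) :
    |P.real A - Q.real A| ≤ tvDist P Q := by
  refine le_csSup ⟨P.real univ + Q.real univ, ?_⟩ ⟨A, hA, rfl⟩
  rintro r ⟨B, -, rfl⟩
  calc |P.real B - Q.real B| ≤ |P.real B| + |Q.real B| := abs_sub _ _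
    _ ≤ P.real univ + Q.real univ := by
      rw [abs_of_nonneg measureReal_nonneg, abs_of_nonneg measureReal_nonneg]
      exact add_le_add (measureReal_mono (subset_univ B)) (measureReal_mono (subset_univ B))

lemma one_sub_tvDist_le_measureReal_add_measureReal_compl {Ω : Type*} [MeasurableSpace Ω]
    (P Q : Measure Ω) [IsProbabilityMeasure P] [IsProbabilityMeasure Q] {A : Set Ω}
    (hA : MeasurableSet A) :
    1 - tvDist P Q ≤ P.real A + Q.real Aᶜ := by
  have := (abs_le.1 (abs_sub_le_tvDist P Q hA)).1
  rw [probReal_compl_eq_one_sub hA]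
  linarith

lemma Function.Involutive.sum_add_sum_comp {α M : Type*} [Fintype α] [AddCommMonoid M]
    {e : α → α} (he : Function.Involutive e) (f : α → M) :
    ∑ x, (f x + f (e x)) = ∑ x, f x + ∑ x, f x := by
  rw [Finset.sum_add_distrib]
  exact congrArg _ (Equiv.sum_comp he.toPerm f)

def flipAt {ι : Type*} [DecidableEq ι] (i : ι) (σ : ι → Bool) : ι → Bool :=
  Function.update σ i (!σ i)

@[simp]
lemma flipAt_apply_self {ι : Type*} [DecidableEq ι] (i : ι) (σ : ι → Bool) :
    flipAt i σ i = !σ i :=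
  Function.update_self ..

lemma flipAt_involutive {ι : Type*} [DecidableEq ι] (i : ι) :
    Function.Involutive (flipAt i) := by
  intro σ
  simp [flipAt, Function.update_idem]

lemma hamming01_flipAt {m : ℕ} (σ : Fin m → Bool) (i : Fin m) :
    hamming01 σ (flipAt i σ) = 1 := by
  unfold hamming01
  rw [Finset.sum_eq_single i]
  · simp
  · intro j _ hj
    simp [flipAt, Function.update_of_ne hj]
  · simp

section Estimator

variable {Ω : Type*} [MeasurableSpace Ω] {m : ℕ} {σhat : Ω → Fin m → Bool}

lemma measurableSet_apply_ne (hσhat : Measurable σhat) (i : Fin m) (b : Bool) :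
    MeasurableSet {ω | σhat ω i ≠ b} :=
  (measurable_pi_apply i).comp hσhat (measurableSet_singleton b).compl

lemma integral_hamming01_eq_sum (μ : Measure Ω) [IsFiniteMeasure μ] (hσhat : Measurable σhat)
    (σ : Fin m → Bool) :
    ∫ ω, hamming01 (σhat ω) σ ∂μ = ∑ i, μ.real {ω | σhat ω i ≠ σ i} := by
  have hind : ∀ i, (fun ω => if σhat ω i ≠ σ i then (1 : ℝ) else 0)
      = {ω | σhat ω i ≠ σ i}.indicator 1 := by
    intro i
    ext ω
    simp [indicator_apply]
  unfold hamming01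
  rw [integral_finsetSum _ fun i _ => by
    rw [hind i]; exact (integrable_const 1).indicator (measurableSet_apply_ne hσhat i (σ i))]
  exact Finset.sum_congr rfl fun i _ => by
    rw [hind i, integral_indicator_one (measurableSet_apply_ne hσhat i (σ i))]

lemma two_pow_mul_le_two_mul_sum_measureReal_apply_ne (P : (Fin m → Bool) → Measure Ω)
    [∀ σ, IsProbabilityMeasure (P σ)] {α : ℝ}
    (hTV : ∀ σ σ' : Fin m → Bool, hamming01 σ σ' = 1 → tvDist (P σ) (P σ') ≤ α)
    (hσhat : Measurable σhat) (i : Fin m) :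
    2 ^ m * (1 - α) ≤ 2 * ∑ σ, (P σ).real {ω | σhat ω i ≠ σ i} := by
  have hpair : ∀ σ, 1 - α ≤ (P σ).real {ω | σhat ω i ≠ σ i}
      + (P (flipAt i σ)).real {ω | σhat ω i ≠ flipAt i σ i} := by
    intro σ
    have hcompl : {ω | σhat ω i ≠ flipAt i σ i} = {ω | σhat ω i ≠ σ i}ᶜ := by
      ext ω
      simp
    rw [hcompl]
    linarith [hTV σ _ (hamming01_flipAt σ i),
      one_sub_tvDist_le_measureReal_add_measureReal_compl (P σ) (P (flipAt i σ))
        (measurableSet_apply_ne hσhat i (σ i))]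
  rw [two_mul, ← (flipAt_involutive i).sum_add_sum_comp]
  calc 2 ^ m * (1 - α) = ∑ _σ : Fin m → Bool, (1 - α) := by
        simp only [Finset.sum_const, Finset.card_univ, Fintype.card_pi, Fintype.card_bool,
          Finset.prod_const, Fintype.card_fin, nsmul_eq_mul, Nat.cast_pow, Nat.cast_ofNat]
    _ ≤ _ := Finset.sum_le_sum fun σ _ => hpair σ

end Estimator

theorem assouad_lemma_general {Ω : Type*} [MeasurableSpace Ω] (m : ℕ)
    (P : (Fin m → Bool) → Measure Ω)
    (hP : ∀ σ, IsProbabilityMeasure (P σ))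
    (α : ℝ)
    (hTV : ∀ σ σ' : Fin m → Bool, hamming01 σ σ' = 1 → tvDist (P σ) (P σ') ≤ α)
    (σhat : Ω → (Fin m → Bool)) (hσhat : Measurable σhat) :
    ∃ σ : Fin m → Bool,
      (m : ℝ) / 2 * (1 - α) ≤ ∫ ω, hamming01 (σhat ω) σ ∂(P σ) := by
  have hsum : ∑ _σ : Fin m → Bool, (m : ℝ) / 2 * (1 - α)
      ≤ ∑ σ, ∫ ω, hamming01 (σhat ω) σ ∂(P σ) := by
    simp_rw [integral_hamming01_eq_sum (P _) hσhat]
    rw [Finset.sum_comm]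
    calc ∑ _σ : Fin m → Bool, (m : ℝ) / 2 * (1 - α)
        = ∑ _i : Fin m, 2 ^ m * (1 - α) / 2 := by
          simp only [Finset.sum_const, Finset.card_univ, Fintype.card_pi, Fintype.card_bool,
            Finset.prod_const, Fintype.card_fin, nsmul_eq_mul, Nat.cast_pow, Nat.cast_ofNat]
          ring
      _ ≤ _ := Finset.sum_le_sum fun i _ => by
        linarith [two_pow_mul_le_two_mul_sum_measureReal_apply_ne P hTV hσhat i]
  obtain ⟨σ, -, hσ⟩ := Finset.exists_le_of_sum_le Finset.univ_nonempty hsum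
  exact ⟨σ, hσ⟩

/-- **Assouad's lemma.** If `{P_σ : σ ∈ {0,1}^m}` are probability measures with
`V(P_σ, P_{σ'}) ≤ α < 1` whenever `ρ(σ, σ') = 1`, then every estimator `σ̂`
has maximal risk `max_σ E_{P_σ}[ρ(σ̂, σ)] ≥ (m/2)(1 − α)`. -/
theorem assouad_lemma {Ω : Type*} [MeasurableSpace Ω] (m : ℕ)
    (P : (Fin m → Bool) → Measure Ω)
    (hP : ∀ σ, IsProbabilityMeasure (P σ))
    (α : ℝ) (hα : α < 1)
    (hTV : ∀ σ σ' : Fin m → Bool, hamming01 σ σ' = 1 → tvDist (P σ) (P σ') ≤ α)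
    (σhat : Ω → (Fin m → Bool)) (hσhat : Measurable σhat) :
    ∃ σ : Fin m → Bool,
      (m : ℝ) / 2 * (1 - α) ≤ ∫ ω, hamming01 (σhat ω) σ ∂(P σ) :=
  assouad_lemma_general m P hP α hTV σhat hσhat
end
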